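/- Let P be a simple d-polytope in E^d with m facets and let ε_2 ≥ 0 satisfy ε_2 ≤ ((1 − γ)/(4(1 + d)))^{m−d}, ε_2 ≤ (1 − γ)/(2(1 + d)·√d·α), and ε_2 ≤ 5(1 − γ)^{m−d} / (18·C(d, ⌊d/2⌋)·2^{m−d}·(3^{m−d} − 2^{m−d})), where C(a,b) is the binomial coefficient. Then for every vertex v of P, {x ∈ Π_{v,ε_2} : σ_i(q(x)) ≥ 0 for all m−d+2 ≤ i ≤ m} ⊆ C_v ∪ P. -/

import Mathlib

/-!
Put `y = q(x)`, let `A` be the `d` facets through `v` and `t = m - d`. Since `α` controls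
`‖x - v‖` by `|q_v(x)|`, on `Π_{v,ε₂}` we have `|y_j| ≤ ε₂` for `j ∈ A` and `y_j ≥ (1 - γ)/2`
otherwise. Expanding `σ_{t+2}(y) ≥ 0` over `A ∪ Aᶜ` gives `σ₂(y_A) ≥ -(5/18)|y_A|²`, so
`σ₁(y_A)² = |y_A|² + 2σ₂(y_A) ≥ (4/9)|y_A|²`. If `y ≥ 0` then `x ∈ P`. Otherwise some `y_j`,
`j ∈ A`, is negative; deleting the negative coordinates one at a time flips the sign of the
`σ_i`, `i ≥ t + 1`, of the remaining ones, and this forces `σ₁(y_A) ≤ 0`, i.e. `x ∈ C_v`.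
-/

noncomputable section

open Metric Set Finset Matrix
open scoped RealInnerProductSpace BigOperators Classical

namespace AverkovHenk

abbrev E (d : ℕ) := EuclideanSpace ℝ (Fin d)

/-- Support function `h(P,u)` of `P` in direction `u`. -/
def supp {d : ℕ} (P : Set (E d)) (u : E d) : ℝ :=
  sSup ((fun x => ⟪u, x⟫) '' P)

/-- The normalized affine function `q_F` of the facet with outward unit normal `u`. -/
def qf {d : ℕ} (P : Set (E d)) (u : E d) (x : E d) : ℝ :=
  (supp P u - ⟪u, x⟫) / Metric.diam P

/-- The exposed face of `P` in direction `u`. -/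
def faceOf {d : ℕ} (P : Set (E d)) (u : E d) : Set (E d) :=
  {x ∈ P | ⟪u, x⟫ = supp P u}

/-- `u` is an outward unit normal of a facet (a `(d-1)`-dimensional face) of `P`. -/
def IsFacetNormal {d : ℕ} (P : Set (E d)) (u : E d) : Prop :=
  ‖u‖ = 1 ∧ Module.finrank ℝ ↥(vectorSpan ℝ (faceOf P u)) = d - 1

/-- The vertices of `P`, i.e. its extreme points. -/
def vertices {d : ℕ} (P : Set (E d)) : Set (E d) := Set.extremePoints ℝ P

/-- The `l`-th elementary symmetric function of `y_1, …, y_m`. -/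
def esymm {m : ℕ} (y : Fin m → ℝ) (l : ℕ) : ℝ :=
  ∑ J ∈ Finset.powersetCard l (Finset.univ : Finset (Fin m)), ∏ j ∈ J, y j

/-- A presentation of a convex `d`-polytope `P ⊆ E^d` by the `m` outward unit normals
`u 0, …, u (m-1)` of its facets, together with the induced representation
`P = {x | q_j(x) ≥ 0 for all j}`. -/
structure FacetRep (d m : ℕ) where
  P : Set (E d)
  u : Fin m → E d
  convex : Convex ℝ P
  compact : IsCompact P
  fulldim : (interior P).Nonempty
  inj : Function.Injective u
  facet : ∀ j, IsFacetNormal P (u j)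
  complete : ∀ w : E d, IsFacetNormal P w → ∃ j, w = u j
  rep : P = {x | ∀ j, 0 ≤ qf P (u j) x}

namespace FacetRep

variable {d m : ℕ}

/-- The vector `q(x) = (q_1(x), …, q_m(x))`. -/
def q (R : FacetRep d m) (x : E d) : Fin m → ℝ := fun j => qf R.P (R.u j) x

/-- The indices of the facets containing the point `v`. -/
def act (R : FacetRep d m) (v : E d) : Finset (Fin m) :=
  Finset.univ.filter fun j => R.q v j = 0

/-- The polytope is simple: each vertex lies on exactly `d` facets. -/
def Simple (R : FacetRep d m) : Prop :=
  ∀ v ∈ vertices R.P, (R.act v).card = d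

/-- The enlarged polytope `P_ε`. -/
def Peps (R : FacetRep d m) (ε : ℝ) : Set (E d) := {x | ∀ j, -ε ≤ R.q x j}

/-- The box `Π_{v,ε} = {x : |q_v(x)|_∞ ≤ ε}`. -/
def Piv (R : FacetRep d m) (v : E d) (ε : ℝ) : Set (E d) :=
  {x | ∀ j ∈ R.act v, |R.q x j| ≤ ε}

/-- The cone `C_v = {x : -σ_1(q_v(x)) ≥ (2/3)|q_v(x)|}` (Euclidean norm). -/
def Cv (R : FacetRep d m) (v : E d) : Set (E d) :=
  {x | (2/3) * Real.sqrt (∑ j ∈ R.act v, (R.q x j)^2) ≤ -(∑ j ∈ R.act v, R.q x j)}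

/-- The polytope `P^v_{ε,δ}`. -/
def Pv (R : FacetRep d m) (v : E d) (ε δ : ℝ) : Set (E d) :=
  {x | (∀ j ∈ R.act v, -ε ≤ R.q x j) ∧ ∀ j ∉ R.act v, δ ≤ R.q x j}

/-- `γ = max{1 - q_F(v) : F a facet, v a vertex not on F}`. -/
def gam (R : FacetRep d m) : ℝ :=
  sSup {c | ∃ v ∈ vertices R.P, ∃ j, R.q v j ≠ 0 ∧ c = 1 - R.q v j}

/-- The polynomial `f_k` built from weights `y_v` over the vertex set `V`. -/
def fk (R : FacetRep d m) (V : Finset (E d)) (y : ↥V → ℝ) (k : ℕ) (x : E d) : ℝ :=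
  ∑ v : ↥V, y v * ((∑ j ∈ R.act v.1, (1 - R.q x j)^(2*k)) / (R.act v.1).card)^(2*k)

/-- The matrix `A_k` indexed by the vertex set `V`. -/
def Ak (R : FacetRep d m) (V : Finset (E d)) (k : ℕ) : Matrix ↥V ↥V ℝ :=
  Matrix.of fun w v : ↥V => ((∑ j ∈ R.act v.1, (1 - R.q w.1 j)^(2*k)) / (R.act v.1).card)^(2*k)

/-- `deg(P)`: the maximal number of facets through a vertex. -/
def degP (R : FacetRep d m) (V : Finset (E d)) : ℕ := V.sup fun v => (R.act v).card

end FacetRep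

/-- `|U_s^{-1}|_2` where `U_s` is the matrix with rows `u_j^T`, `j ∈ s`: the supremum of `‖x‖`
over the set where the Euclidean norm of `U_s x` is at most `1`. -/
def invNormU {d m : ℕ} (u : Fin m → E d) (s : Finset (Fin m)) : ℝ :=
  sSup {c | ∃ x : E d, Real.sqrt (∑ j ∈ s, (⟪u j, x⟫)^2) ≤ 1 ∧ c = ‖x‖}

/-- `α = max_{v ∈ vert(P)} |U_v^{-1}|_2`. -/
def alpha {d m : ℕ} (R : FacetRep d m) (V : Finset (E d)) : ℝ :=
  sSup {a | ∃ v ∈ V, a = invNormU R.u (R.act v)}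

/-- The normal cone `N(Q,x) = {u : ⟨x,u⟩ = h(Q,u)}`. -/
def normalCone {d : ℕ} (Q : Set (E d)) (x : E d) : Set (E d) :=
  {u | ⟪u, x⟫ = supp Q u}

/-- `S` is an edge (a 1-dimensional face) of `P`. -/
def IsEdgeOf {d : ℕ} (P S : Set (E d)) : Prop :=
  IsExposed ℝ P S ∧ Module.finrank ℝ ↥(vectorSpan ℝ S) = 1


section Esymm

variable {ι R : Type*}

def esymmOn [CommSemiring R] (s : Finset ι) (y : ι → R) (k : ℕ) : R :=
  ∑ J ∈ s.powersetCard k, ∏ j ∈ J, y j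

section Algebra

variable [CommSemiring R] (s t : Finset ι) (y : ι → R)

@[simp]
lemma esymmOn_zero : esymmOn s y 0 = 1 := by
  simp [esymmOn]

lemma esymmOn_of_card_lt {k : ℕ} (h : s.card < k) : esymmOn s y k = 0 := by
  simp [esymmOn, Finset.powersetCard_eq_empty.2 h]

lemma esymmOn_one : esymmOn s y 1 = ∑ j ∈ s, y j := by
  simp [esymmOn, Finset.powersetCard_one]

lemma esymmOn_card : esymmOn s y s.card = ∏ j ∈ s, y j := by
  simp [esymmOn]

variable [DecidableEq ι]

lemma esymmOn_insert {a : ι} (ha : a ∉ s) (k : ℕ) :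
    esymmOn (insert a s) y (k + 1) = esymmOn s y (k + 1) + y a * esymmOn s y k := by
  have hnot : ∀ J ∈ s.powersetCard k, a ∉ J := fun J hJ h =>
    ha ((Finset.mem_powersetCard.1 hJ).1 h)
  rw [esymmOn, Finset.powersetCard_succ_insert ha, Finset.sum_union, Finset.sum_image, esymmOn,
    esymmOn, Finset.mul_sum]
  · exact congrArg _ (Finset.sum_congr rfl fun J hJ => Finset.prod_insert (hnot J hJ))
  · intro J hJ K hK hJK
    simpa [Finset.erase_insert (hnot J hJ), Finset.erase_insert (hnot K hK)] using
      congrArg (Finset.erase · a) hJK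
  · refine Finset.disjoint_left.2 fun J hJ hJ' => ?_
    obtain ⟨K, -, rfl⟩ := Finset.mem_image.1 hJ'
    exact ha ((Finset.mem_powersetCard.1 hJ).1 (Finset.mem_insert_self a K))

/-- The generating polynomial `∏ (1 + y_j X)` is multiplicative in the index set. -/
lemma esymmOn_union (hst : Disjoint s t) (n : ℕ) :
    esymmOn (s ∪ t) y n = ∑ k ∈ Finset.range (n + 1), esymmOn s y k * esymmOn t y (n - k) := by
  induction s using Finset.induction generalizing n with
  | empty =>
    rw [Finset.empty_union, Finset.sum_range_succ', Finset.sum_eq_zero fun k _ =>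
      by rw [esymmOn_of_card_lt _ _ (by simp), zero_mul]]
    simp
  | @insert a s ha ih =>
    have hat : a ∉ t := Finset.disjoint_left.1 hst (Finset.mem_insert_self a s)
    rw [Finset.insert_union]
    cases n with
    | zero => simp
    | succ n =>
      rw [esymmOn_insert _ _ (by simp [ha, hat]), ih (Finset.disjoint_insert_left.1 hst).2,
        ih (Finset.disjoint_insert_left.1 hst).2, Finset.mul_sum]
      simp only [Finset.sum_range_succ' _ (n + 1), esymmOn_insert _ _ ha, esymmOn_zero, add_mul,
        Finset.sum_add_distrib, Nat.add_sub_add_right, mul_assoc]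
      ring

lemma sq_sum_eq_sum_sq_add_two_mul_esymmOn_two :
    (∑ j ∈ s, y j) ^ 2 = ∑ j ∈ s, y j ^ 2 + 2 * esymmOn s y 2 := by
  induction s using Finset.induction with
  | empty => simp [esymmOn_of_card_lt (∅ : Finset ι) y (by simp : (∅ : Finset ι).card < 2)]
  | @insert a s ha ih =>
    rw [esymmOn_insert _ _ ha, Finset.sum_insert ha, Finset.sum_insert ha, add_sq, ih, esymmOn_one]
    ring

end Algebra

end Esymm

section Sign

variable {ι : Type*} [DecidableEq ι] {y : ι → ℝ}

/-- Downward induction on `k`, starting where `σ_k(S - a)` vanishes, through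
`σ_{k+1}(S) = σ_{k+1}(S - a) + y_a σ_k(S - a)`. -/
lemma esymmOn_erase_sign {S : Finset ι} {a : ι} (ha : a ∈ S) (hya : y a < 0) {K n : ℕ} {c : ℝ}
    (h : ∀ k, K ≤ k + n → 0 ≤ c * esymmOn S y k) (k : ℕ) (hk : K ≤ k + (n + 1)) :
    0 ≤ -c * esymmOn (S.erase a) y k := by
  set U := S.erase a
  suffices key : ∀ g k, U.card + 1 ≤ k + g → K ≤ k + (n + 1) → 0 ≤ -c * esymmOn U y k from
    key _ k (Nat.le_add_left _ _) hk
  intro g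
  induction g with
  | zero =>
    intro k hUk _
    rw [esymmOn_of_card_lt _ _ (by omega), mul_zero]
  | succ g ih =>
    intro k hUk hk
    have hnext := ih (k + 1) (by omega) (by omega)
    have hS := h (k + 1) (by omega)
    rw [← Finset.insert_erase ha, esymmOn_insert _ _ (Finset.notMem_erase a S)] at hS
    nlinarith

lemma esymmOn_sdiff_sign {S N : Finset ι} (hNS : N ⊆ S) (hN : ∀ j ∈ N, y j < 0) {K : ℕ}
    (h : ∀ k, K ≤ k → 0 ≤ esymmOn S y k) (k : ℕ) (hk : K ≤ k + N.card) :
    0 ≤ (-1) ^ N.card * esymmOn (S \ N) y k := by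
  induction N using Finset.induction generalizing k with
  | empty => simpa using h k hk
  | @insert a N haN ih =>
    rw [Finset.card_insert_of_notMem haN] at hk ⊢
    rw [Finset.sdiff_insert, pow_succ, mul_neg_one]
    refine esymmOn_erase_sign (Finset.mem_sdiff.2 ⟨hNS (Finset.mem_insert_self a N), haN⟩)
      (hN a (Finset.mem_insert_self a N)) (n := N.card) (fun k hk => ?_) k hk
    exact ih (fun j hj => hNS (Finset.mem_insert_of_mem hj))
      (fun j hj => hN j (Finset.mem_insert_of_mem hj)) k hk

end Sign

section Bounds

variable {ι : Type*} {y : ι → ℝ} {s : Finset ι}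

lemma esymmOn_nonneg (h : ∀ j ∈ s, 0 ≤ y j) (k : ℕ) : 0 ≤ esymmOn s y k :=
  Finset.sum_nonneg fun _ hJ => Finset.prod_nonneg fun j hj =>
    h j ((Finset.mem_powersetCard.1 hJ).1 hj)

lemma esymmOn_card_pos (h : ∀ j ∈ s, 0 < y j) : 0 < esymmOn s y s.card := by
  rw [esymmOn_card]
  exact Finset.prod_pos h

lemma esymmOn_le_choose_mul_pow {M : ℝ} (h0 : ∀ j ∈ s, 0 ≤ y j) (h : ∀ j ∈ s, y j ≤ M) (k : ℕ) :
    esymmOn s y k ≤ s.card.choose k * M ^ k := by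
  calc esymmOn s y k ≤ ∑ _J ∈ s.powersetCard k, M ^ k := by
        refine Finset.sum_le_sum fun J hJ => ?_
        obtain ⟨hJs, rfl⟩ := Finset.mem_powersetCard.1 hJ
        rw [← Finset.prod_const]
        exact Finset.prod_le_prod (fun j hj => h0 j (hJs hj)) fun j hj => h j (hJs hj)
    _ = s.card.choose k * M ^ k := by
        rw [Finset.sum_const, Finset.card_powersetCard, nsmul_eq_mul]

/-- Every product of `k ≥ 2` of the `y_j` contains a pair `|y_a y_b| ≤ (y_a² + y_b²)/2`. -/
lemma abs_esymmOn_le {M : ℝ} (h : ∀ j ∈ s, |y j| ≤ M) {k : ℕ} (hk : 2 ≤ k) :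
    |esymmOn s y k| ≤ s.card.choose k * M ^ (k - 2) * ((∑ j ∈ s, y j ^ 2) / 2) := by
  have key : ∀ J ∈ s.powersetCard k, |∏ j ∈ J, y j| ≤ M ^ (k - 2) * ((∑ j ∈ s, y j ^ 2) / 2) := by
    intro J hJ
    obtain ⟨hJs, hJk⟩ := Finset.mem_powersetCard.1 hJ
    obtain ⟨a, ha, b, hb, hab⟩ := Finset.one_lt_card.1 (by omega : 1 < J.card)
    have hb' : b ∈ J.erase a := Finset.mem_erase.2 ⟨hab.symm, hb⟩
    have hpair : |y a| * |y b| ≤ (∑ j ∈ s, y j ^ 2) / 2 := by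
      have hsub : ∑ j ∈ {a, b}, y j ^ 2 ≤ ∑ j ∈ s, y j ^ 2 :=
        Finset.sum_le_sum_of_subset_of_nonneg (Finset.insert_subset (hJs ha)
          (Finset.singleton_subset_iff.2 (hJs hb))) fun j _ _ => sq_nonneg _
      rw [Finset.sum_pair hab] at hsub
      nlinarith [sq_nonneg (|y a| - |y b|), sq_abs (y a), sq_abs (y b)]
    have hrest : ∏ j ∈ (J.erase a).erase b, |y j| ≤ M ^ (k - 2) := by
      have hcard : ((J.erase a).erase b).card = k - 2 := by
        rw [Finset.card_erase_of_mem hb', Finset.card_erase_of_mem ha, hJk]; omega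
      rw [← hcard, ← Finset.prod_const]
      exact Finset.prod_le_prod (fun _ _ => abs_nonneg _) fun j hj =>
        h j (hJs (Finset.mem_of_mem_erase (Finset.mem_of_mem_erase hj)))
    rw [Finset.abs_prod, ← Finset.mul_prod_erase _ _ ha, ← Finset.mul_prod_erase _ _ hb',
      ← mul_assoc, mul_comm]
    exact mul_le_mul hrest hpair (by positivity)
      ((Finset.prod_nonneg fun _ _ => abs_nonneg _).trans hrest)
  calc |esymmOn s y k| ≤ ∑ J ∈ s.powersetCard k, |∏ j ∈ J, y j| := Finset.abs_sum_le_sum_abs _ _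
    _ ≤ ∑ _J ∈ s.powersetCard k, M ^ (k - 2) * ((∑ j ∈ s, y j ^ 2) / 2) := Finset.sum_le_sum key
    _ = s.card.choose k * M ^ (k - 2) * ((∑ j ∈ s, y j ^ 2) / 2) := by
        rw [Finset.sum_const, Finset.card_powersetCard, nsmul_eq_mul, mul_assoc]

/-- Each `(|s|-k)`-subproduct misses `k` factors that are at least `β`. -/
lemma esymmOn_card_sub_le {β : ℝ} (hβ : 0 < β) (h : ∀ j ∈ s, β ≤ y j) {k : ℕ} (hk : k ≤ s.card) :
    esymmOn s y (s.card - k) ≤ s.card.choose k * esymmOn s y s.card / β ^ k := by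
  have key : ∀ J ∈ s.powersetCard (s.card - k), (∏ j ∈ J, y j) * β ^ k ≤ ∏ j ∈ s, y j := by
    intro J hJ
    obtain ⟨hJs, hJc⟩ := Finset.mem_powersetCard.1 hJ
    rw [← Finset.prod_sdiff hJs, mul_comm]
    refine mul_le_mul_of_nonneg_right ?_
      (Finset.prod_nonneg fun j hj => hβ.le.trans (h j (hJs hj)))
    have hcard : (s \ J).card = k := by rw [Finset.card_sdiff_of_subset hJs, hJc]; omega
    rw [← hcard, ← Finset.prod_const]
    exact Finset.prod_le_prod (fun _ _ => hβ.le) fun j hj => h j (Finset.mem_sdiff.1 hj).1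
  rw [le_div_iff₀ (by positivity), esymmOn_card, esymmOn, Finset.sum_mul, ← Nat.choose_symm hk,
    ← Finset.card_powersetCard, ← nsmul_eq_mul, ← Finset.sum_const]
  exact Finset.sum_le_sum key

end Bounds

section Estimates

variable {ι : Type*} [DecidableEq ι] {y : ι → ℝ} {s t : Finset ι}

lemma esymmOn_mul_esymmOn_le_union (hst : Disjoint s t) (hs : ∀ j ∈ s, 0 ≤ y j)
    (ht : ∀ j ∈ t, 0 ≤ y j) (k n : ℕ) :
    esymmOn s y k * esymmOn t y n ≤ esymmOn (s ∪ t) y (k + n) := by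
  have h := Finset.single_le_sum (f := fun i => esymmOn s y i * esymmOn t y (k + n - i))
    (fun i _ => mul_nonneg (esymmOn_nonneg hs i) (esymmOn_nonneg ht _))
    (Finset.mem_range.2 (by omega : k < k + n + 1))
  rw [esymmOn_union _ _ _ hst]
  simpa only [Nat.add_sub_cancel_left] using h

/-- The correction terms are dominated by a geometric series of ratio `1/2`. -/
lemma esymmOn_union_card_le_two_mul {ε β : ℝ} (hst : Disjoint s t) (hε : 0 ≤ ε)
    (hs0 : ∀ j ∈ s, 0 ≤ y j) (hsε : ∀ j ∈ s, y j ≤ ε) (hβ : 0 < β) (ht : ∀ j ∈ t, β ≤ y j)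
    (hw : s.card * t.card * (ε / β) ≤ 1 / 2) :
    esymmOn (s ∪ t) y t.card ≤ 2 * esymmOn t y t.card := by
  set τ := esymmOn t y t.card
  have hτ : 0 ≤ τ := esymmOn_nonneg (fun j hj => hβ.le.trans (ht j hj)) _
  have hterm : ∀ k ∈ Finset.range t.card,
      esymmOn s y (k + 1) * esymmOn t y (t.card - (k + 1)) ≤ τ * (1 / 2) ^ (k + 1) := by
    intro k hk
    have hchoose : (s.card.choose (k + 1) * t.card.choose (k + 1) : ℝ) * (ε / β) ^ (k + 1)
        ≤ (1 / 2) ^ (k + 1) := by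
      calc _ ≤ ((s.card : ℝ) ^ (k + 1) * (t.card : ℝ) ^ (k + 1)) * (ε / β) ^ (k + 1) := by
            gcongr <;> exact_mod_cast Nat.choose_le_pow _ _
        _ = (s.card * t.card * (ε / β)) ^ (k + 1) := by ring
        _ ≤ (1 / 2) ^ (k + 1) := by gcongr
    calc _ ≤ (s.card.choose (k + 1) * ε ^ (k + 1)) * esymmOn t y (t.card - (k + 1)) :=
          mul_le_mul_of_nonneg_right (esymmOn_le_choose_mul_pow hs0 hsε _)
            (esymmOn_nonneg (fun j hj => hβ.le.trans (ht j hj)) _)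
      _ ≤ (s.card.choose (k + 1) * ε ^ (k + 1)) * (t.card.choose (k + 1) * τ / β ^ (k + 1)) := by
          gcongr
          exact esymmOn_card_sub_le hβ ht (Finset.mem_range.1 hk)
      _ = τ * ((s.card.choose (k + 1) * t.card.choose (k + 1) : ℝ) * (ε / β) ^ (k + 1)) := by
          rw [div_pow]; ring
      _ ≤ τ * (1 / 2) ^ (k + 1) := mul_le_mul_of_nonneg_left hchoose hτ
  have hgeom : ∑ k ∈ Finset.range t.card, (1 / 2 : ℝ) ^ (k + 1) ≤ 1 := by
    simp only [pow_succ, ← Finset.sum_mul]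
    linarith [sum_geometric_two_le t.card]
  rw [esymmOn_union _ _ _ hst, Finset.sum_range_succ', esymmOn_zero, one_mul, Nat.sub_zero]
  calc _ ≤ ∑ k ∈ Finset.range t.card, τ * (1 / 2) ^ (k + 1) + τ :=
        add_le_add_left (Finset.sum_le_sum hterm) _
    _ ≤ 2 * τ := by rw [← Finset.mul_sum]; nlinarith

lemma two_thirds_mul_sqrt_le_neg_sum {s : Finset ι} (hsum : ∑ j ∈ s, y j ≤ 0)
    (h2 : -esymmOn s y 2 ≤ 5 / 18 * ∑ j ∈ s, y j ^ 2) :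
    2 / 3 * √(∑ j ∈ s, y j ^ 2) ≤ -∑ j ∈ s, y j := by
  have hQ : 0 ≤ ∑ j ∈ s, y j ^ 2 := Finset.sum_nonneg fun j _ => sq_nonneg _
  have hsq := sq_sum_eq_sum_sq_add_two_mul_esymmOn_two s y
  refine (pow_le_pow_iff_left₀ (by positivity) (by linarith) two_ne_zero).1 ?_
  rw [mul_pow, Real.sq_sqrt hQ, neg_sq]
  linarith

end Estimates

section Cone

variable {ι : Type*} [Fintype ι] [DecidableEq ι] {y : ι → ℝ} {A : Finset ι} {ε β : ℝ}

/-- Expand `σ_{|Aᶜ|+2}(y) ≥ 0` over `A ∪ Aᶜ`: the summand `σ₂(y_A) σ_{|Aᶜ|}(y_{Aᶜ})` must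
compensate all later summands, which are small because `y_A` is. -/
lemma neg_esymmOn_two_le (hε : 0 ≤ ε) (hβ : 0 < β) (hA : ∀ j ∈ A, |y j| ≤ ε)
    (hB : ∀ j ∈ Aᶜ, β ≤ y j) (hσ : 0 ≤ esymmOn Finset.univ y (Aᶜ.card + 2)) :
    -esymmOn A y 2 ≤
      A.card.choose (A.card / 2) * ((1 + ε / β) ^ Aᶜ.card - 1) * ((∑ j ∈ A, y j ^ 2) / 2) := by
  set t := Aᶜ.card
  set τ := esymmOn Aᶜ y t
  set C : ℝ := (A.card.choose (A.card / 2) : ℝ)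
  set S := (∑ j ∈ A, y j ^ 2) / 2
  have hτ : 0 < τ := esymmOn_card_pos fun j hj => hβ.trans_le (hB j hj)
  have hexp : esymmOn Finset.univ y (t + 2) = esymmOn A y 2 * τ +
      ∑ k ∈ Finset.range t, esymmOn A y (k + 3) * esymmOn Aᶜ y (t - (k + 1)) := by
    rw [← Finset.union_compl A, esymmOn_union _ _ _ disjoint_compl_right, Finset.sum_range_succ',
      Finset.sum_range_succ', Finset.sum_range_succ',
      esymmOn_of_card_lt Aᶜ y (by omega : t < t + 2 - (0 + 1)),
      esymmOn_of_card_lt Aᶜ y (by omega : t < t + 2 - 0), show t + 2 - (0 + 1 + 1) = t by omega]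
    simp only [mul_zero, add_zero]
    rw [add_comm]
    exact congrArg _ (Finset.sum_congr rfl fun k _ => by congr 2; omega)
  have hterm : ∀ k ∈ Finset.range t, esymmOn A y (k + 3) * esymmOn Aᶜ y (t - (k + 1)) ≤
      C * S * τ * (t.choose (k + 1) * (ε / β) ^ (k + 1)) := by
    intro k hk
    have hσk : esymmOn A y (k + 3) ≤ C * ε ^ (k + 1) * S := by
      refine (le_abs_self _).trans ((abs_esymmOn_le hA (by omega : 2 ≤ k + 3)).trans ?_)
      rw [show k + 3 - 2 = k + 1 by omega]
      gcongr
      exact Nat.cast_le.2 (Nat.choose_le_middle _ _)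
    calc _ ≤ (C * ε ^ (k + 1) * S) * (t.choose (k + 1) * τ / β ^ (k + 1)) :=
          mul_le_mul hσk (esymmOn_card_sub_le hβ hB (Finset.mem_range.1 hk))
            (esymmOn_nonneg (fun j hj => hβ.le.trans (hB j hj)) _) (by positivity)
      _ = C * S * τ * (t.choose (k + 1) * (ε / β) ^ (k + 1)) := by rw [div_pow]; ring
  have hbinom : ∑ k ∈ Finset.range t, (t.choose (k + 1) : ℝ) * (ε / β) ^ (k + 1) =
      (1 + ε / β) ^ t - 1 := by
    rw [add_comm, add_pow, Finset.sum_range_succ']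
    simp [mul_comm]
  have hsum := Finset.sum_le_sum hterm
  rw [← Finset.mul_sum, hbinom] at hsum
  nlinarith

lemma univ_sdiff_filter_neg (A : Finset ι) (y : ι → ℝ) :
    Finset.univ \ A.filter (fun j => y j < 0) = A.filter (fun j => ¬ y j < 0) ∪ Aᶜ := by
  ext j; by_cases hj : j ∈ A <;> simp [hj]

lemma sum_filter_not_neg_mul_le (hβ : 0 < β) (hB : ∀ j ∈ Aᶜ, β ≤ y j) :
    (∑ j ∈ A.filter (fun j => ¬ y j < 0), y j) * esymmOn Aᶜ y Aᶜ.card ≤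
      esymmOn (Finset.univ \ A.filter (fun j => y j < 0)) y (Aᶜ.card + 1) := by
  rw [univ_sdiff_filter_neg, add_comm, ← esymmOn_one]
  exact esymmOn_mul_esymmOn_le_union
    (Finset.disjoint_of_subset_left (Finset.filter_subset _ _) disjoint_compl_right)
    (fun j hj => not_lt.1 (Finset.mem_filter.1 hj).2) (fun j hj => hβ.le.trans (hB j hj)) 1 _

lemma esymmOn_univ_sdiff_filter_neg_le (hε : 0 ≤ ε) (hβ : 0 < β) (hA : ∀ j ∈ A, |y j| ≤ ε)
    (hB : ∀ j ∈ Aᶜ, β ≤ y j) (hw : A.card * Aᶜ.card * (ε / β) ≤ 1 / 2) :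
    esymmOn (Finset.univ \ A.filter (fun j => y j < 0)) y Aᶜ.card ≤
      2 * esymmOn Aᶜ y Aᶜ.card := by
  rw [univ_sdiff_filter_neg]
  refine esymmOn_union_card_le_two_mul
    (Finset.disjoint_of_subset_left (Finset.filter_subset _ _) disjoint_compl_right) hε
    (fun j hj => not_lt.1 (Finset.mem_filter.1 hj).2)
    (fun j hj => (le_abs_self _).trans (hA j (Finset.filter_subset _ _ hj))) hβ hB (le_trans ?_ hw)
  gcongr
  exact Finset.filter_subset _ _

/-- Let `N` be the set of negative `y_j`, `j ∈ A`, and `P = A \ N`. By `esymmOn_sdiff_sign`,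
`σ_{|Aᶜ|+1}(y_{P ∪ Aᶜ}) ≤ 0` if `|N|` is odd; if `|N|` is even, removing from `N` its largest
element `y_a` gives `σ_{|Aᶜ|+1}(y_{P ∪ Aᶜ}) ≤ -y_a σ_{|Aᶜ|}(y_{P ∪ Aᶜ})`. Either way the sum over
`P` cannot outweigh the sum over `N`. -/
lemma sum_nonpos_of_exists_neg (hε : 0 ≤ ε) (hβ : 0 < β) (hA : ∀ j ∈ A, |y j| ≤ ε)
    (hB : ∀ j ∈ Aᶜ, β ≤ y j) (hσ : ∀ k, Aᶜ.card + 2 ≤ k → 0 ≤ esymmOn Finset.univ y k)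
    (hw : A.card * Aᶜ.card * (ε / β) ≤ 1 / 2) (hneg : ∃ j ∈ A, y j < 0) :
    ∑ j ∈ A, y j ≤ 0 := by
  set N := A.filter (fun j => y j < 0)
  have hNneg : ∀ j ∈ N, y j < 0 := fun j hj => (Finset.mem_filter.1 hj).2
  have hNne : N.Nonempty := by
    obtain ⟨j, hjA, hj⟩ := hneg
    exact ⟨j, Finset.mem_filter.2 ⟨hjA, hj⟩⟩
  have hτ : 0 < esymmOn Aᶜ y Aᶜ.card := esymmOn_card_pos fun j hj => hβ.trans_le (hB j hj)
  have hP := sum_filter_not_neg_mul_le hβ hB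
  have hsign : ∀ M ⊆ N, M.Nonempty →
      0 ≤ (-1) ^ M.card * esymmOn (Finset.univ \ M) y (Aᶜ.card + 1) := fun M hM hMne =>
    esymmOn_sdiff_sign (Finset.subset_univ M) (fun j hj => hNneg j (hM hj)) hσ _
      (by have := hMne.card_pos; omega)
  rw [← Finset.sum_filter_add_sum_filter_not A (fun j => y j < 0)]
  rcases Nat.even_or_odd N.card with heven | hodd
  · obtain ⟨a, haN, hamax⟩ := Finset.exists_max_image N y hNne
    have hN2 : 2 ≤ N.card := by
      have := hNne.card_pos; rcases heven with ⟨r, hr⟩; omega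
    have hodd' : Odd (N.erase a).card := by
      rw [Finset.card_erase_of_mem haN]; exact Nat.Even.sub_odd (by omega) heven odd_one
    have hins := hsign _ (Finset.erase_subset a N)
      (Finset.card_pos.1 (by rw [Finset.card_erase_of_mem haN]; omega))
    rw [hodd'.neg_one_pow, Finset.sdiff_erase (Finset.mem_univ a),
      esymmOn_insert _ _ (fun h => (Finset.mem_sdiff.1 h).2 haN)] at hins
    have hdouble := esymmOn_univ_sdiff_filter_neg_le hε hβ hA hB hw
    have hPa : ∑ j ∈ A.filter (fun j => ¬ y j < 0), y j ≤ -2 * y a := by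
      refine le_of_mul_le_mul_right ?_ hτ
      nlinarith [mul_le_mul_of_nonneg_left hdouble (neg_nonneg.2 (hNneg a haN).le)]
    have hNa : ∑ j ∈ N, y j ≤ 2 * y a := by
      have : ∑ j ∈ N, y j ≤ N.card • y a := Finset.sum_le_card_nsmul N y (y a) hamax
      rw [nsmul_eq_mul] at this
      have hN2' : (2 : ℝ) ≤ N.card := by exact_mod_cast hN2
      nlinarith [hNneg a haN]
    linarith
  · have h := hsign N subset_rfl hNne
    rw [hodd.neg_one_pow] at h
    have hP0 : ∑ j ∈ A.filter (fun j => ¬ y j < 0), y j ≤ 0 := by nlinarith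
    linarith [Finset.sum_nonpos fun j hj => (hNneg j hj).le]

theorem nonneg_or_two_thirds_mul_sqrt_le (hε : 0 ≤ ε) (hβ : 0 < β) (hA : ∀ j ∈ A, |y j| ≤ ε)
    (hB : ∀ j ∈ Aᶜ, β ≤ y j) (hσ : ∀ k, Aᶜ.card + 2 ≤ k → 0 ≤ esymmOn Finset.univ y k)
    (hw : A.card * Aᶜ.card * (ε / β) ≤ 1 / 2)
    (hC : A.card.choose (A.card / 2) * ((1 + ε / β) ^ Aᶜ.card - 1) ≤ 5 / 9) :
    (∀ j, 0 ≤ y j) ∨ 2 / 3 * √(∑ j ∈ A, y j ^ 2) ≤ -∑ j ∈ A, y j := by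
  by_cases hneg : ∃ j ∈ A, y j < 0
  · refine Or.inr (two_thirds_mul_sqrt_le_neg_sum
      (sum_nonpos_of_exists_neg hε hβ hA hB hσ hw hneg) ?_)
    have hQ : 0 ≤ ∑ j ∈ A, y j ^ 2 := Finset.sum_nonneg fun j _ => sq_nonneg _
    have := neg_esymmOn_two_le hε hβ hA hB (hσ _ le_rfl)
    nlinarith
  · simp only [not_exists, not_and, not_lt] at hneg
    refine Or.inl fun j => ?_
    by_cases hj : j ∈ A
    · exact hneg j hj
    · exact hβ.le.trans (hB j (Finset.mem_compl.2 hj))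

end Cone

section Numerics

lemma one_add_pow_le {w : ℝ} (hw0 : 0 ≤ w) (hw : w ≤ 1 / 2) (t : ℕ) :
    (1 + w) ^ t ≤ 1 - 2 * w + 2 * w * (3 / 2) ^ t := by
  have h : ((1 - 2 * w) * 1 + 2 * w * (3 / 2)) ^ t ≤ (1 - 2 * w) * 1 ^ t + 2 * w * (3 / 2) ^ t :=
    (convexOn_pow t).2 (Set.mem_Ici.2 zero_le_one) (Set.mem_Ici.2 (by norm_num))
      (by linarith) (by linarith) (by ring)
  rw [one_pow, mul_one] at h
  rwa [show 1 + w = 1 - 2 * w + 2 * w * (3 / 2) by ring]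

lemma natCast_mul_mul_div_le_half {d t : ℕ} {c ε : ℝ} (hc0 : 0 < c) (hc1 : c ≤ 1)
    (hε : ε ≤ (c / (4 * (1 + d))) ^ t) : d * t * (ε / (c / 2)) ≤ 1 / 2 := by
  rcases Nat.eq_zero_or_pos t with rfl | ht
  · norm_num
  have hQ : (4 * d * t : ℝ) ≤ (4 * (1 + d)) ^ t := by
    have := one_add_mul_le_pow (by linarith [d.cast_nonneg (α := ℝ)] : (-2 : ℝ) ≤ 4 * d + 3) t
    rw [show (1 + (4 * d + 3) : ℝ) = 4 * (1 + d) by ring] at this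
    nlinarith [t.cast_nonneg (α := ℝ)]
  have hεc : ε ≤ c / (4 * (1 + d)) ^ t := by
    refine hε.trans ?_
    rw [div_pow]
    gcongr
    exact pow_le_of_le_one hc0.le hc1 ht.ne'
  have hdtε : d * t * ε ≤ c / 4 := by
    calc (d * t * ε : ℝ) ≤ d * t * (c / (4 * (1 + d)) ^ t) := by gcongr
      _ ≤ c / 4 := by
        rw [← mul_div_assoc, div_le_div_iff₀ (by positivity) (by norm_num)]
        nlinarith
  rw [← mul_div_assoc, div_le_iff₀ (by positivity)]
  linarith

lemma mul_one_add_pow_sub_one_le {d t : ℕ} {C c ε : ℝ} (hC : 0 < C) (hc0 : 0 < c) (hc1 : c ≤ 1)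
    (hε : 0 ≤ ε) (h1 : ε ≤ (c / (4 * (1 + d))) ^ t)
    (h3 : ε ≤ 5 * c ^ t / (18 * C * 2 ^ t * (3 ^ t - 2 ^ t))) :
    C * ((1 + ε / (c / 2)) ^ t - 1) ≤ 5 / 9 := by
  rcases Nat.eq_zero_or_pos t with rfl | ht
  · norm_num
  have hd : (1 : ℝ) ≤ 1 + d := le_add_of_nonneg_right d.cast_nonneg
  have hε1 : ε * (4 * (1 + d)) ≤ c := by
    rw [← le_div_iff₀ (by positivity)]
    exact h1.trans (pow_le_of_le_one (by positivity)
      (div_le_one_of_le₀ (by nlinarith) (by positivity)) ht.ne')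
  set w := ε / (c / 2)
  have hw0 : 0 ≤ w := by positivity
  have hw1 : w ≤ 1 / 2 := by
    rw [div_le_iff₀ (by positivity)]
    nlinarith
  have hP : (2 : ℝ) ≤ 2 ^ t := le_self_pow₀ (by norm_num) ht.ne'
  have hD : (0 : ℝ) < 3 ^ t - 2 ^ t :=
    sub_pos.2 (pow_lt_pow_left₀ (by norm_num) (by norm_num) ht.ne')
  have h3' : ε * (18 * C * 2 ^ t * (3 ^ t - 2 ^ t)) ≤ 5 * c := by
    rw [← le_div_iff₀ (by positivity)]
    refine h3.trans ?_
    gcongr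
    exact pow_le_of_le_one hc0.le hc1 ht.ne'
  calc C * ((1 + w) ^ t - 1) ≤ C * (2 * w * ((3 / 2) ^ t - 1)) := by
        gcongr; linarith [one_add_pow_le hw0 hw1 t]
    _ = 4 * (ε * (18 * C * 2 ^ t * (3 ^ t - 2 ^ t))) / (18 * c * (2 ^ t) ^ 2) := by
        rw [div_pow]; simp only [w]; field_simp; ring
    _ ≤ 4 * (5 * c) / (18 * c * (2 ^ t) ^ 2) := by gcongr
    _ ≤ 5 / 9 := by
        have hP2 : (4 : ℝ) ≤ (2 ^ t) ^ 2 := by nlinarith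
        rw [div_le_iff₀ (by positivity)]
        nlinarith [mul_le_mul_of_nonneg_left hP2 hc0.le]

lemma mul_mul_le_half_of_le_div {d : ℕ} {a α c ε : ℝ} (hd : 0 < d) (haα : a ≤ α)
    (hc : 0 < c) (hε : 0 ≤ ε) (h : ε ≤ c / (2 * (1 + d) * √d * α)) (hα : 0 < α) :
    a * (√d * ε) ≤ c / 2 := by
  have hd' : (0 : ℝ) < d := Nat.cast_pos.2 hd
  rw [le_div_iff₀ (by positivity)] at h
  calc a * (√d * ε) ≤ α * (√d * ε) := by gcongr
    _ = ε * (2 * (1 + d) * √d * α) / (2 * (1 + d)) := by field_simp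
    _ ≤ c / (2 * (1 + d)) := by gcongr
    _ ≤ c / 2 := by gcongr; linarith

end Numerics

section InvNormU

variable {d m : ℕ} {u : Fin m → E d} {s : Finset (Fin m)}

lemma norm_le_invNormU_mul (hs : ∀ z : E d, (∀ j ∈ s, ⟪u j, z⟫ = 0) → z = 0) (z : E d) :
    ‖z‖ ≤ invNormU u s * √(∑ j ∈ s, ⟪u j, z⟫ ^ 2) := by
  let T : E d →ₗ[ℝ] EuclideanSpace ℝ s := (EuclideanSpace.equiv s ℝ).symm.toLinearMap ∘ₗ
    LinearMap.pi fun j : s => innerₛₗ ℝ (u j)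
  have hT : ∀ z, ‖T z‖ = √(∑ j ∈ s, ⟪u j, z⟫ ^ 2) := fun z => by
    rw [EuclideanSpace.norm_eq, ← Finset.sum_coe_sort s]
    simp [T, Real.norm_eq_abs, sq_abs]
  obtain ⟨K, -, hK⟩ := T.exists_antilipschitzWith (LinearMap.ker_eq_bot'.2 fun z hz =>
    hs z fun j hj => by simpa [T] using congrArg (· ⟨j, hj⟩) hz)
  have hbdd : BddAbove {c | ∃ x : E d, √(∑ j ∈ s, ⟪u j, x⟫ ^ 2) ≤ 1 ∧ c = ‖x‖} := by
    refine ⟨K, ?_⟩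
    rintro _ ⟨x, hx, rfl⟩
    simpa [hT] using
      (hK.le_mul_dist x 0).trans (mul_le_of_le_one_right K.2 (by simpa [hT] using hx))
  rw [← hT]
  rcases (norm_nonneg (T z)).eq_or_lt with hr | hr
  · rw [← hr, mul_zero, norm_le_zero_iff]
    exact hs z fun j hj => by
      simpa [T] using congrArg (· ⟨j, hj⟩) (norm_eq_zero.1 hr.symm)
  · have hmem : ‖‖T z‖⁻¹ • z‖ ∈ {c | ∃ x : E d, √(∑ j ∈ s, ⟪u j, x⟫ ^ 2) ≤ 1 ∧ c = ‖x‖} :=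
      ⟨_, by rw [← hT, map_smul, norm_smul, norm_inv, norm_norm, inv_mul_cancel₀ hr.ne'], rfl⟩
    have := le_csSup hbdd hmem
    rwa [norm_smul, norm_inv, norm_norm, inv_mul_le_iff₀ hr, mul_comm] at this

lemma invNormU_pos (hd : 0 < d) (hs : ∀ z : E d, (∀ j ∈ s, ⟪u j, z⟫ = 0) → z = 0) :
    0 < invNormU u s := by
  have : Nonempty (Fin d) := ⟨⟨0, hd⟩⟩
  obtain ⟨z, hz⟩ := exists_norm_eq (E d) zero_le_one
  have := norm_le_invNormU_mul hs z
  rw [hz] at this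
  exact pos_of_mul_pos_left (one_pos.trans_le this) (Real.sqrt_nonneg _)

end InvNormU

namespace FacetRep

open Filter Topology

variable {d m : ℕ} (R : FacetRep d m)

lemma diam_pos (hd : 0 < d) : 0 < Metric.diam R.P := by
  have : Nonempty (Fin d) := ⟨⟨0, hd⟩⟩
  obtain ⟨z, hz⟩ := R.fulldim
  exact Metric.diam_pos (infinite_of_mem_nhds z (mem_interior_iff_mem_nhds.1 hz)).nontrivial
    R.compact.isBounded

lemma q_nonneg {x : E d} (hx : x ∈ R.P) (j : Fin m) : 0 ≤ R.q x j := by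
  rw [R.rep] at hx
  exact hx j

lemma q_le_one (hd : 0 < d) {x : E d} (hx : x ∈ R.P) (j : Fin m) : R.q x j ≤ 1 := by
  rw [q, qf, div_le_one (R.diam_pos hd), sub_le_iff_le_add']
  refine csSup_le (R.fulldim.mono interior_subset |>.image _) ?_
  rintro _ ⟨p, hp, rfl⟩
  have := real_inner_le_norm (R.u j) (p - x)
  rw [(R.facet j).1, one_mul, inner_sub_right, ← dist_eq_norm] at this
  linarith [Metric.dist_le_diam_of_mem R.compact.isBounded hp hx]

lemma q_add_smul (x z : E d) (c : ℝ) (j : Fin m) :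
    R.q (x + c • z) j = R.q x j - c * ⟪R.u j, z⟫ / Metric.diam R.P := by
  simp only [q, qf, inner_add_right, real_inner_smul_right]
  ring

lemma q_sub_q_le (x z : E d) (j : Fin m) : R.q x j - R.q z j ≤ ‖z - x‖ / Metric.diam R.P := by
  have := R.q_add_smul x (z - x) 1 j
  rw [one_smul, add_sub_cancel, one_mul] at this
  rw [this, sub_sub_cancel]
  gcongr
  simpa [(R.facet j).1] using real_inner_le_norm (R.u j) (z - x)

lemma q_pos_of_notMem_act {x : E d} (hx : x ∈ R.P) {j : Fin m} (hj : j ∉ R.act x) :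
    0 < R.q x j :=
  (R.q_nonneg hx j).lt_of_ne' fun h => hj (Finset.mem_filter.2 ⟨Finset.mem_univ j, h⟩)

lemma eventually_add_smul_mem {v z : E d} (hv : v ∈ R.P) (hz : ∀ j ∈ R.act v, ⟪R.u j, z⟫ = 0) :
    ∀ᶠ c in 𝓝 (0 : ℝ), v + c • z ∈ R.P := by
  rw [R.rep]
  show ∀ᶠ c in 𝓝 (0 : ℝ), ∀ j, 0 ≤ R.q (v + c • z) j
  refine eventually_all.2 fun j => ?_
  simp_rw [q_add_smul]
  by_cases hj : j ∈ R.act v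
  · refine Eventually.of_forall fun c => ?_
    rw [hz j hj, (Finset.mem_filter.1 hj).2]
    simp
  · refine (Tendsto.eventually_const_lt (R.q_pos_of_notMem_act hv hj) ?_).mono fun _ => le_of_lt
    have : Continuous fun c : ℝ => R.q v j - c * ⟪R.u j, z⟫ / Metric.diam R.P := by fun_prop
    simpa using this.tendsto 0

lemma eq_zero_of_inner_act_eq_zero {v : E d} (hv : v ∈ vertices R.P) {z : E d}
    (hz : ∀ j ∈ R.act v, ⟪R.u j, z⟫ = 0) : z = 0 := by
  have hz' : ∀ j ∈ R.act v, ⟪R.u j, -z⟫ = 0 := fun j hj => by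
    rw [inner_neg_right, hz j hj, neg_zero]
  have h : ∀ᶠ c in 𝓝[≠] (0 : ℝ), (v + c • z ∈ R.P ∧ v + c • -z ∈ R.P) ∧ c ≠ 0 :=
    (((R.eventually_add_smul_mem hv.1 hz).and (R.eventually_add_smul_mem hv.1 hz')).filter_mono
      nhdsWithin_le_nhds).and self_mem_nhdsWithin
  obtain ⟨c, ⟨hplus, hminus⟩, hc⟩ := h.exists
  have hmid : v ∈ openSegment ℝ (v + c • z) (v + c • -z) :=
    ⟨1 / 2, 1 / 2, by norm_num, by norm_num, by norm_num, by module⟩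
  have := hv.2 hplus hminus hmid
  rw [add_eq_left, smul_eq_zero] at this
  exact this.resolve_left hc

lemma bddAbove_gam_set :
    BddAbove {c | ∃ v ∈ vertices R.P, ∃ j, R.q v j ≠ 0 ∧ c = 1 - R.q v j} :=
  ⟨1, by rintro _ ⟨v, hv, j, -, rfl⟩; linarith [R.q_nonneg hv.1 j]⟩

lemma one_sub_gam_le_q {v : E d} (hv : v ∈ vertices R.P) {j : Fin m} (hj : j ∉ R.act v) :
    1 - R.gam ≤ R.q v j := by
  have := le_csSup R.bddAbove_gam_set ⟨v, hv, j, (R.q_pos_of_notMem_act hv.1 hj).ne', rfl⟩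
  rw [gam]
  linarith

lemma gam_nonneg (hd : 0 < d) : 0 ≤ R.gam :=
  Real.sSup_nonneg (by rintro _ ⟨v, hv, j, -, rfl⟩; exact sub_nonneg.2 (R.q_le_one hd hv.1 j))

lemma gam_lt_one (hfin : (vertices R.P).Finite) : R.gam < 1 := by
  rcases Set.eq_empty_or_nonempty {c | ∃ v ∈ vertices R.P, ∃ j, R.q v j ≠ 0 ∧ c = 1 - R.q v j}
    with he | hne
  · rw [gam, he, Real.sSup_empty]
    exact one_pos
  · have hΓ : {c | ∃ v ∈ vertices R.P, ∃ j, R.q v j ≠ 0 ∧ c = 1 - R.q v j}.Finite :=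
      ((hfin.prod Set.finite_univ).image fun p : E d × Fin m => 1 - R.q p.1 p.2).subset
        (by rintro _ ⟨v, hv, j, -, rfl⟩; exact ⟨(v, j), ⟨hv, Set.mem_univ j⟩, rfl⟩)
    rw [gam, hΓ.csSup_lt_iff hne]
    rintro _ ⟨v, hv, j, hj, rfl⟩
    linarith [(R.q_nonneg hv.1 j).lt_of_ne' hj]

lemma norm_sub_le_of_mem_Piv (hd : 0 < d) {v : E d} (hv : v ∈ vertices R.P) {ε : ℝ} (hε : 0 ≤ ε)
    {x : E d} (hx : x ∈ R.Piv v ε) :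
    ‖x - v‖ ≤ invNormU R.u (R.act v) * (√(R.act v).card * ε) * Metric.diam R.P := by
  have hspan : ∀ z : E d, (∀ j ∈ R.act v, ⟪R.u j, z⟫ = 0) → z = 0 := fun z hz =>
    R.eq_zero_of_inner_act_eq_zero hv hz
  have hdiam := R.diam_pos hd
  have hinner : ∀ j ∈ R.act v, ⟪R.u j, x - v⟫ ^ 2 ≤ (ε * Metric.diam R.P) ^ 2 := by
    intro j hj
    have hq := R.q_add_smul v (x - v) 1 j
    rw [one_smul, add_sub_cancel, one_mul, (Finset.mem_filter.1 hj).2, zero_sub] at hq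
    have hqx := hx j hj
    rw [hq, abs_neg, abs_div, abs_of_pos hdiam, div_le_iff₀ hdiam] at hqx
    exact sq_le_sq.2 (hqx.trans (le_abs_self _))
  have hsum : √(∑ j ∈ R.act v, ⟪R.u j, x - v⟫ ^ 2) ≤ √(R.act v).card * (ε * Metric.diam R.P) := by
    rw [← Real.sqrt_sq (by positivity : 0 ≤ ε * Metric.diam R.P), ← Real.sqrt_mul (by positivity)]
    refine Real.sqrt_le_sqrt ((Finset.sum_le_sum hinner).trans ?_)
    rw [Finset.sum_const, nsmul_eq_mul]
  calc ‖x - v‖ ≤ invNormU R.u (R.act v) * √(∑ j ∈ R.act v, ⟪R.u j, x - v⟫ ^ 2) :=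
        norm_le_invNormU_mul hspan _
    _ ≤ invNormU R.u (R.act v) * (√(R.act v).card * (ε * Metric.diam R.P)) :=
        mul_le_mul_of_nonneg_left hsum (invNormU_pos hd hspan).le
    _ = _ := by ring

lemma half_le_q_of_mem_Piv (hd : 0 < d) {v : E d} (hv : v ∈ vertices R.P) {ε : ℝ} (hε : 0 ≤ ε)
    (hsmall : invNormU R.u (R.act v) * (√(R.act v).card * ε) ≤ (1 - R.gam) / 2)
    {x : E d} (hx : x ∈ R.Piv v ε) {j : Fin m} (hj : j ∉ R.act v) :
    (1 - R.gam) / 2 ≤ R.q x j := by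
  have hdist : ‖x - v‖ / Metric.diam R.P ≤ invNormU R.u (R.act v) * (√(R.act v).card * ε) := by
    rw [div_le_iff₀ (R.diam_pos hd)]
    exact R.norm_sub_le_of_mem_Piv hd hv hε hx
  linarith [R.one_sub_gam_le_q hv hj, R.q_sub_q_le v x j]

end FacetRep

lemma invNormU_le_alpha {d m : ℕ} (R : FacetRep d m) {V : Finset (E d)} {v : E d} (hv : v ∈ V) :
    invNormU R.u (R.act v) ≤ alpha R V :=
  le_csSup ((V.finite_toSet.image fun w => invNormU R.u (R.act w)).subset
    (by rintro _ ⟨w, hw, rfl⟩; exact ⟨w, hw, rfl⟩)).bddAbove ⟨v, hv, rfl⟩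

theorem statement15 (d m : ℕ) (hd : 2 ≤ d) (R : FacetRep d m) (hs : R.Simple)
    (V : Finset (E d)) (hV : (↑V : Set (E d)) = vertices R.P)
    (ε₂ : ℝ) (h0 : 0 ≤ ε₂)
    (h1 : ε₂ ≤ ((1 - R.gam) / (4 * (1 + d))) ^ (m - d))
    (h2 : ε₂ ≤ (1 - R.gam) / (2 * (1 + d) * Real.sqrt d * alpha R V))
    (h3 : ε₂ ≤ 5 * (1 - R.gam) ^ (m - d) /
      (18 * (Nat.choose d (d / 2) : ℝ) * 2 ^ (m - d) * (3 ^ (m - d) - 2 ^ (m - d)))) :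
    ∀ v ∈ vertices R.P,
      {x ∈ R.Piv v ε₂ | ∀ i, m - d + 2 ≤ i → i ≤ m → 0 ≤ esymm (R.q x) i}
        ⊆ R.Cv v ∪ R.P := by
  intro v hv x ⟨hxPiv, hxsym⟩
  have hd0 : 0 < d := by omega
  have hA : (R.act v).card = d := hs v hv
  have ht : (R.act v)ᶜ.card = m - d := by rw [Finset.card_compl, Fintype.card_fin, hA]
  have hc0 : 0 < 1 - R.gam := sub_pos.2 (R.gam_lt_one (hV ▸ V.finite_toSet))
  have hc1 : 1 - R.gam ≤ 1 := by linarith [R.gam_nonneg hd0]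
  have hα := invNormU_le_alpha R (V := V) (by rw [← Finset.mem_coe, hV]; exact hv)
  have hinv := invNormU_pos hd0 fun z hz => R.eq_zero_of_inner_act_eq_zero hv hz
  have hsmall : invNormU R.u (R.act v) * (√(R.act v).card * ε₂) ≤ (1 - R.gam) / 2 := by
    rw [hA]; exact mul_mul_le_half_of_le_div hd0 hα hc0 h0 h2 (hinv.trans_le hα)
  have hσ : ∀ k, (R.act v)ᶜ.card + 2 ≤ k → 0 ≤ esymmOn Finset.univ (R.q x) k := by
    intro k hk
    rcases le_or_gt k m with hkm | hkm
    · exact hxsym k (ht ▸ hk) hkm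
    · rw [esymmOn_of_card_lt _ _ (by simpa using hkm)]
  have hw := natCast_mul_mul_div_le_half hc0 hc1 h1
  have hC := mul_one_add_pow_sub_one_le (Nat.cast_pos.2 (Nat.choose_pos (Nat.div_le_self d 2)))
    hc0 hc1 h0 h1 h3
  rcases nonneg_or_two_thirds_mul_sqrt_le h0 (half_pos hc0) hxPiv
    (fun j hj => R.half_le_q_of_mem_Piv hd0 hv h0 hsmall hxPiv (Finset.mem_compl.1 hj)) hσ
    (by rw [hA, ht]; exact hw) (by rw [hA, ht]; exact hC) with h | h
  · exact Or.inr (by rw [R.rep]; exact h)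
  · exact Or.inl h

end AverkovHenk
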